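/- arXiv:math/0302021 — 2 statements merged into one kernel-verified Lean document; each statement's English description precedes it below -/
import Mathlib

section
/- Let S = (s_{ij}) be a symmetric l×l integer matrix with zero diagonal, let π(S) = ∏_{1≤i<j≤l}(z_i−z_j)^{s_{ij}} ∈ Φ^l, and set s_i = Σ_j s_{ij} (the i-th row sum). Then for any integers n₁,…,n_l one has Δ*(n₁,…,n_l)(π(S)) = ((n₁+s₁)z₁ + ⋯ + (n_l+s_l)z_l)·π(S). In particular, π(S) is (n₁,…,n_l)-regular if and only if s_i = −n_i for every i = 1,…,l. -/
open scoped Classical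

noncomputable section

namespace Griess

open MvPolynomial

variable {k : Type} [Field k]

/-- The field `k(z₁,…,z_l)` of rational functions over `k` in `l` variables. -/
abbrev RF (k : Type) [Field k] (l : ℕ) : Type := FractionRing (MvPolynomial (Fin l) k)

/-- The variable `zᵢ` as an element of the rational function field. -/
def zv {k : Type} [Field k] {l : ℕ} (i : Fin l) : RF k l :=
  algebraMap (MvPolynomial (Fin l) k) (RF k l) (MvPolynomial.X i)

/-- The space `Φ^l` of rational functions of the form
`p(z₁,…,z_l) · ∏_{i<j} (zᵢ - z_j)^{k_{ij}}`. -/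
def Phi (k : Type) [Field k] (l : ℕ) : Set (RF k l) :=
  { x | ∃ (p : MvPolynomial (Fin l) k) (e : Fin l → Fin l → ℤ),
      x = algebraMap (MvPolynomial (Fin l) k) (RF k l) p *
        ∏ i : Fin l, ∏ j : Fin l, (if i < j then (zv i - zv j) ^ e i j else 1) }

/-- `D` is the family of partial derivative operators `∂_{z₁},…,∂_{z_l}`:
a family of `k`-linear derivations with `D i (z j) = δ_{ij}`. -/
def IsPartialDeriv {l : ℕ} (D : Fin l → Derivation k (RF k l) (RF k l)) : Prop :=
  ∀ i j : Fin l, D i (zv j) = if j = i then 1 else 0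

/-- The operator `Δ = Σᵢ ∂_{zᵢ}`. -/
def Delta {l : ℕ} (D : Fin l → Derivation k (RF k l) (RF k l)) (α : RF k l) : RF k l :=
  ∑ i, D i α

/-- The operator `Δ*(n₁,…,n_l) = Σᵢ (zᵢ² ∂_{zᵢ} + nᵢ zᵢ)`. -/
def DeltaStar {l : ℕ} (D : Fin l → Derivation k (RF k l) (RF k l)) (n : Fin l → ℤ)
    (α : RF k l) : RF k l :=
  ∑ i, ((zv i) ^ 2 * D i α + (n i : RF k l) * zv i * α)

section Subst

variable {l : ℕ}

/-- The embedding of polynomials in `z₁,…,z_l` into rational functions of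
`z₁,…,z_l` and one extra variable `t` (`= RatFunc.X`). -/
def toRatFuncHom (k : Type) [Field k] (l : ℕ) :
    Polynomial (MvPolynomial (Fin l) k) →+* RatFunc (RF k l) :=
  (algebraMap (Polynomial (RF k l)) (RatFunc (RF k l))).comp
    (Polynomial.mapRingHom (algebraMap (MvPolynomial (Fin l) k) (RF k l)))

lemma toRatFuncHom_injective : Function.Injective (toRatFuncHom k l) := by
  have h1 : Function.Injective (algebraMap (Polynomial (RF k l)) (RatFunc (RF k l))) :=
    IsFractionRing.injective _ _
  have h2 : Function.Injective
      (Polynomial.mapRingHom (algebraMap (MvPolynomial (Fin l) k) (RF k l))) :=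
    Polynomial.map_injective _ (IsFractionRing.injective _ _)
  exact fun a b hab => h2 (h1 hab)

/-- Polynomial level substitution `z_j ↦ t·z_j` for `j ∈ J`. -/
def scaleAux (k : Type) [Field k] (l : ℕ) (J : Finset (Fin l)) :
    MvPolynomial (Fin l) k →+* Polynomial (MvPolynomial (Fin l) k) :=
  (MvPolynomial.aeval (R := k) fun i =>
    if i ∈ J then Polynomial.X * Polynomial.C (MvPolynomial.X i)
    else Polynomial.C (MvPolynomial.X i)).toRingHom

lemma scaleAux_injective (J : Finset (Fin l)) :
    Function.Injective (scaleAux k l J) := by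
  have h : (Polynomial.evalRingHom (1 : MvPolynomial (Fin l) k)).comp (scaleAux k l J)
      = RingHom.id _ := by
    apply MvPolynomial.ringHom_ext
    · intro r; simp [scaleAux]
    · intro i; by_cases hi : i ∈ J <;> simp [scaleAux, hi]
  intro p q hpq
  have hp := DFunLike.congr_fun h p
  have hq := DFunLike.congr_fun h q
  simp only [RingHom.comp_apply, RingHom.id_apply] at hp hq
  rw [← hp, ← hq, hpq]

/-- The substitution `z_j ↦ t·z_j` (for `j ∈ J`), as a map from rational functions
in `z₁,…,z_l` to rational functions in `z₁,…,z_l` and `t`.  Reading off the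
coefficients of the Laurent expansion in `t` at `t = 0` of `scaleJ J α` yields the
decomposition of `α` into its homogeneous components with respect to the total degree
in the variables `{z_j : j ∈ J}`, i.e. the expansion of `α` in the domain where the
variables of `J` are much smaller than the remaining variables. -/
def scaleJ (J : Finset (Fin l)) : RF k l →+* RatFunc (RF k l) :=
  IsFractionRing.lift (g := (toRatFuncHom k l).comp (scaleAux k l J))
    (fun a b hab => scaleAux_injective J (toRatFuncHom_injective hab))

/-- Polynomial level substitution `z_i ↦ z_j + t`. -/
def subPairAux (k : Type) [Field k] (l : ℕ) (i j : Fin l) :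
    MvPolynomial (Fin l) k →+* Polynomial (MvPolynomial (Fin l) k) :=
  (MvPolynomial.aeval (R := k) fun s =>
    if s = i then Polynomial.X + Polynomial.C (MvPolynomial.X j)
    else Polynomial.C (MvPolynomial.X s)).toRingHom

lemma subPairAux_injective (i j : Fin l) :
    Function.Injective (subPairAux k l i j) := by
  have h : (Polynomial.evalRingHom (MvPolynomial.X i - MvPolynomial.X j)).comp
      (subPairAux k l i j) = RingHom.id _ := by
    apply MvPolynomial.ringHom_ext
    · intro r; simp [subPairAux]
    · intro s; by_cases hs : s = i <;> simp [subPairAux, hs]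
  intro p q hpq
  have hp := DFunLike.congr_fun h p
  have hq := DFunLike.congr_fun h q
  simp only [RingHom.comp_apply, RingHom.id_apply] at hp hq
  rw [← hp, ← hq, hpq]

/-- The substitution `z_i ↦ z_j + t`, as a map from rational functions in `z₁,…,z_l`
to rational functions in the variables `z₁,…,z_l` and `t`.  Reading off the Laurent
coefficients in `t` at `t = 0` yields the expansion of a rational function in powers
of `z_i - z_j`, with coefficients not involving `z_i`. -/
def subPair (i j : Fin l) : RF k l →+* RatFunc (RF k l) :=
  IsFractionRing.lift (g := (toRatFuncHom k l).comp (subPairAux k l i j))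
    (fun a b hab => subPairAux_injective i j (toRatFuncHom_injective hab))

end Subst

/-- The coefficient of `tᵐ` in the Laurent expansion at `t = 0` of a rational
function of `t`. -/
def lcoeff {L : Type} [Field L] (m : ℤ) (f : RatFunc L) : L :=
  (f : LaurentSeries L).coeff m

/-- The component `(α)_n` of `α` of degree `n` with respect to the partition
`{1,…,l} = Jᶜ ⊔ J` and the weights `d`:  the part of the expansion of `α` in the
domain where the variables of `J` are much smaller than those of `Jᶜ` whose total
degree in the variables `{z_j : j ∈ J}` equals `n - Σ_{j∈J} d_j`. -/
def component {l : ℕ} (J : Finset (Fin l)) (d : Fin l → ℤ) (n : ℤ) (α : RF k l) :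
    RF k l :=
  lcoeff (n - ∑ j ∈ J, d j) (scaleJ J α)

/-- `α` is homogeneous of total degree `d` in the variables `{z_i : i ∈ S}`:
substituting `z_i ↦ t·z_i` for `i ∈ S` multiplies `α` by `t^d`. -/
def IsHomogeneousOn {l : ℕ} (S : Finset (Fin l)) (d : ℤ) (α : RF k l) : Prop :=
  scaleJ S α = RatFunc.X ^ d * RatFunc.C α

/-- `ρ^{(m)}_{ij} α`: the coefficient of `(z_i - z_j)^m` in the expansion of `α`
in powers of `z_i - z_j` (the coefficients do not involve `z_i`). -/
def rho {l : ℕ} (i j : Fin l) (m : ℤ) (α : RF k l) : RF k l :=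
  lcoeff m (subPair i j α)

/-- `α` is a rational function of the variables `{z_i : i ∈ S}` only. -/
def dependsOnlyOn {l : ℕ} (S : Finset (Fin l)) (α : RF k l) : Prop :=
  α ∈ Subfield.closure (Set.range (algebraMap k (RF k l)) ∪ {x | ∃ i ∈ S, x = zv i})

/-- `α` is an admissible function of the variables `{z_i : i ∈ S}` (the space
`R^{|S|}`):  `α ∈ Φ` is a rational function of the variables of `S` only, it is
`(4,…,4)`-regular and homogeneous of degree `-2|S|` in these variables, and all its
components of negative degree, as well as those of degree `1`, vanish (with respect
to every partition of `S` and all weights equal to `2`). -/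
def Admissible {l : ℕ} (D : Fin l → Derivation k (RF k l) (RF k l)) (S : Finset (Fin l))
    (α : RF k l) : Prop :=
  α ∈ Phi k l ∧ dependsOnlyOn S α ∧
    (∑ i ∈ S, ((zv i) ^ 2 * D i α + 4 * zv i * α)) = 0 ∧
    IsHomogeneousOn S (-(2 * (S.card : ℤ))) α ∧
    ∀ J ⊆ S, ∀ n : ℤ, (n < 0 ∨ n = 1) → component J (fun _ => 2) n α = 0

/-- `α` is an indecomposable admissible function of the variables `{z_i : i ∈ S}`
(the space `R₀^{|S|}`): admissible, and all the components `(α)₀` with respect to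
partitions of `S` into two nonempty parts vanish. -/
def AdmissibleInd {l : ℕ} (D : Fin l → Derivation k (RF k l) (RF k l))
    (S : Finset (Fin l)) (α : RF k l) : Prop :=
  Admissible D S α ∧
    ∀ J ⊆ S, J ≠ ∅ → J ≠ S → component J (fun _ => 2) 0 α = 0

section Shift

variable {l : ℕ}

/-- Polynomial level substitution `z_s ↦ z_s - z_t` for `s ∈ S`. -/
def shiftAuxP (k : Type) [Field k] (l : ℕ) (S : Finset (Fin l)) (t : Fin l) :
    MvPolynomial (Fin l) k →+* MvPolynomial (Fin l) k :=
  (MvPolynomial.aeval (R := k) fun s =>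
    if s ∈ S then MvPolynomial.X s - MvPolynomial.X t else MvPolynomial.X s).toRingHom

lemma shiftAuxP_injective (S : Finset (Fin l)) (t : Fin l) (ht : t ∉ S) :
    Function.Injective (shiftAuxP k l S t) := by
  have h : ((MvPolynomial.aeval (R := k) fun s =>
      if s ∈ S then MvPolynomial.X s + MvPolynomial.X t
      else MvPolynomial.X s).toRingHom).comp (shiftAuxP k l S t) = RingHom.id _ := by
    apply MvPolynomial.ringHom_ext
    · intro r; simp [shiftAuxP]
    · intro s
      by_cases hs : s ∈ S
      · have hst : s ≠ t := fun hst => ht (hst ▸ hs)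
        simp [shiftAuxP, hs, ht]
      · simp [shiftAuxP, hs]
  intro p q hpq
  have hp := DFunLike.congr_fun h p
  have hq := DFunLike.congr_fun h q
  simp only [RingHom.comp_apply, RingHom.id_apply] at hp hq
  rw [← hp, ← hq, hpq]

/-- The shift operator substituting `z_s - z_t` for `z_s`, for all `s ∈ S`. -/
def shiftT (S : Finset (Fin l)) (t : Fin l) (ht : t ∉ S) : RF k l →+* RF k l :=
  IsFractionRing.lift
    (g := (algebraMap (MvPolynomial (Fin l) k) (RF k l)).comp (shiftAuxP k l S t))
    (fun a b hab =>
      shiftAuxP_injective S t ht (IsFractionRing.injective _ _ hab))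

/-- The operator `ℰ = Σ_{s ∈ S} (-z_s⁻¹ ∂_{z_s} + 2 z_s⁻²)`. -/
def curlyE {l : ℕ} (D : Fin l → Derivation k (RF k l) (RF k l)) (S : Finset (Fin l))
    (β : RF k l) : RF k l :=
  ∑ s ∈ S, (-((zv s)⁻¹ * D s β) + 2 * (zv s) ^ (-2 : ℤ) * β)

end Shift

end Griess

namespace Griess

/-- `π(S) = ∏_{1≤i<j≤l} (z_i - z_j)^{s_{ij}}` for an integer matrix `S = (s_{ij})`. -/
def piMat {k : Type} [Field k] {l : ℕ} (s : Fin l → Fin l → ℤ) : RF k l :=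
  ∏ i : Fin l, ∏ j : Fin l, (if i < j then (zv i - zv j) ^ s i j else 1)

/-!
The operator `Σᵢ zᵢ² ∂_{zᵢ}` is a derivation sending `zᵢ - zⱼ` to `(zᵢ + zⱼ)(zᵢ - zⱼ)`,
so by the logarithmic Leibniz rule it acts on `π(S)` as multiplication by
`Σ_{i<j} s_{ij} (zᵢ + zⱼ) = Σᵢ sᵢ zᵢ`. Regularity then amounts to `Σᵢ (nᵢ + sᵢ) zᵢ = 0`,
which forces `nᵢ + sᵢ = 0` because the `zᵢ` are `k`-linearly independent and `ℤ → k` is injective.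
-/

end Griess

namespace Derivation

variable {R K : Type*} [CommRing R] [Field K] [Algebra R K] (D : Derivation R K K)

lemma map_zpow_of_eq_mul {u c : K} (hu : D u = c * u) (e : ℤ) :
    D (u ^ e) = e * c * u ^ e := by
  rcases eq_or_ne u 0 with rfl | hu0
  · rcases eq_or_ne e 0 with rfl | he
    · simp
    · simp [zero_zpow e he]
  · rw [leibniz_zpow, hu, zpow_sub_one₀ hu0, smul_eq_mul, zsmul_eq_mul]
    field_simp

lemma map_prod_zpow_of_eq_mul {ι : Type*} (T : Finset ι) {u c : ι → K}
    (hu : ∀ a ∈ T, D (u a) = c a * u a) (e : ι → ℤ) :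
    D (∏ a ∈ T, u a ^ e a) = (∑ a ∈ T, e a * c a) * ∏ a ∈ T, u a ^ e a := by
  classical
  induction T using Finset.induction_on with
  | empty => simp
  | insert a T ha ih =>
    rw [Finset.prod_insert ha, Finset.sum_insert ha, leibniz, smul_eq_mul, smul_eq_mul,
      ih fun b hb => hu b (Finset.mem_insert_of_mem hb),
      D.map_zpow_of_eq_mul (hu a (Finset.mem_insert_self a T))]
    ring

end Derivation

lemma Finset.sum_sum_ite_lt_mul_add {ι R : Type*} [Fintype ι] [LinearOrder ι] [CommRing R]
    {s : ι → ι → ℤ} (hsym : ∀ i j, s i j = s j i) (hdiag : ∀ i, s i i = 0)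
    (f : ι → R) :
    ∑ i, ∑ j, ((if i < j then s i j else 0 : ℤ) : R) * (f i + f j) =
      ∑ i, ((∑ j, s i j : ℤ) : R) * f i := by
  simp only [mul_add, Finset.sum_add_distrib]
  rw [Finset.sum_comm (f := fun i j => ((if i < j then s i j else 0 : ℤ) : R) * f j),
    ← Finset.sum_add_distrib]
  refine Finset.sum_congr rfl fun i _ => ?_
  rw [← Finset.sum_add_distrib, Int.cast_sum, Finset.sum_mul]
  refine Finset.sum_congr rfl fun j _ => ?_
  rcases lt_trichotomy i j with h | rfl | h
  · simp [h, h.not_gt]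
  · simp [hdiag]
  · simp [h, h.not_gt, hsym i j]

namespace Griess

variable {k : Type} [Field k] {l : ℕ}

lemma zv_sub_zv_ne_zero {i j : Fin l} (h : i ≠ j) : (zv i - zv j : RF k l) ≠ 0 :=
  sub_ne_zero.mpr fun hij =>
    h (MvPolynomial.X_injective (IsFractionRing.injective (MvPolynomial (Fin l) k) _ hij))

lemma linearIndependent_zv : LinearIndependent k (zv : Fin l → RF k l) :=
  (MvPolynomial.linearIndependent_X (R := k) (σ := Fin l)).map'
    (IsScalarTower.toAlgHom k (MvPolynomial (Fin l) k) (RF k l)).toLinearMap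
    (LinearMap.ker_eq_bot.mpr (IsFractionRing.injective _ _))

lemma piMat_ne_zero (s : Fin l → Fin l → ℤ) : (piMat s : RF k l) ≠ 0 :=
  Finset.prod_ne_zero_iff.mpr fun i _ => Finset.prod_ne_zero_iff.mpr fun j _ => by
    split_ifs with h
    · exact zpow_ne_zero _ (zv_sub_zv_ne_zero h.ne)
    · exact one_ne_zero

lemma sum_intCast_mul_zv_eq_zero_iff [CharZero k] (c : Fin l → ℤ) :
    ∑ i, ((c i : ℤ) : RF k l) * zv i = 0 ↔ ∀ i, c i = 0 := by
  have hcast : ∀ i, ((c i : ℤ) : RF k l) * zv i = ((c i : ℤ) : k) • zv i := fun i => by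
    rw [Algebra.smul_def, map_intCast]
  simp only [hcast]
  refine ⟨fun h i => ?_, fun h => by simp [h]⟩
  exact_mod_cast Fintype.linearIndependent_iff.mp linearIndependent_zv _ h i

def derivDeltaStar (D : Fin l → Derivation k (RF k l) (RF k l)) :
    Derivation k (RF k l) (RF k l) :=
  ∑ i, (zv i ^ 2 : RF k l) • D i

section

variable (D : Fin l → Derivation k (RF k l) (RF k l))

lemma derivDeltaStar_apply (α : RF k l) :
    derivDeltaStar D α = ∑ i, zv i ^ 2 * D i α := by
  rw [derivDeltaStar, ← Derivation.coeFnAddMonoidHom_apply, map_sum, Finset.sum_apply]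
  rfl

lemma deltaStar_eq_derivDeltaStar_add (n : Fin l → ℤ) (α : RF k l) :
    DeltaStar D n α = derivDeltaStar D α + (∑ i, (n i : RF k l) * zv i) * α := by
  rw [DeltaStar, derivDeltaStar_apply, Finset.sum_add_distrib, Finset.sum_mul]

variable {D}

lemma derivDeltaStar_zv_sub_zv (hD : IsPartialDeriv D) (a b : Fin l) :
    derivDeltaStar D (zv a - zv b) = (zv a + zv b) * (zv a - zv b) := by
  simp only [derivDeltaStar_apply, map_sub, hD _ _, mul_sub, mul_ite, mul_one, mul_zero,
    Finset.sum_ite_eq, Finset.mem_univ, ↓reduceIte]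
  ring

lemma derivDeltaStar_piMat (hD : IsPartialDeriv D) {s : Fin l → Fin l → ℤ}
    (hsym : ∀ i j, s i j = s j i) (hdiag : ∀ i, s i i = 0) :
    derivDeltaStar D (piMat s) = (∑ i, ((∑ j, s i j : ℤ) : RF k l) * zv i) * piMat s := by
  have hprod : (piMat s : RF k l) =
      ∏ p : Fin l × Fin l, (zv p.1 - zv p.2) ^ (if p.1 < p.2 then s p.1 p.2 else 0) := by
    rw [piMat, Fintype.prod_prod_type]
    refine Finset.prod_congr rfl fun i _ => Finset.prod_congr rfl fun j _ => ?_
    split_ifs <;> simp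
  rw [hprod, (derivDeltaStar D).map_prod_zpow_of_eq_mul _
    fun p _ => derivDeltaStar_zv_sub_zv hD p.1 p.2, Fintype.sum_prod_type,
    Finset.sum_sum_ite_lt_mul_add hsym hdiag]

end

/-- for a symmetric integer matrix `S` with zero diagonal,
`Δ*(n₁,…,n_l)(π(S)) = ((n₁+s₁)z₁ + ⋯ + (n_l+s_l)z_l)·π(S)` where `sᵢ` is the `i`-th
row sum; in particular `π(S)` is `(n₁,…,n_l)`-regular iff `sᵢ = -nᵢ` for all `i`. -/
theorem statement0 {k : Type} [Field k] [CharZero k] {l : ℕ}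
    (D : Fin l → Derivation k (RF k l) (RF k l)) (hD : IsPartialDeriv D)
    (s : Fin l → Fin l → ℤ) (hsym : ∀ i j, s i j = s j i) (hdiag : ∀ i, s i i = 0)
    (n : Fin l → ℤ) :
    DeltaStar D n (piMat s) =
      (∑ i, ((n i + ∑ j, s i j : ℤ) : RF k l) * zv i) * piMat s ∧
    (DeltaStar D n (piMat s) = 0 ↔ ∀ i, (∑ j, s i j) = - n i) := by
  have hΔ : DeltaStar D n (piMat s) =
      (∑ i, ((n i + ∑ j, s i j : ℤ) : RF k l) * zv i) * piMat s := by
    rw [deltaStar_eq_derivDeltaStar_add, derivDeltaStar_piMat hD hsym hdiag, ← add_mul,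
      ← Finset.sum_add_distrib]
    congr 1
    refine Finset.sum_congr rfl fun i _ => ?_
    push_cast
    ring
  refine ⟨hΔ, ?_⟩
  rw [hΔ, mul_eq_zero, or_iff_left (piMat_ne_zero s), sum_intCast_mul_zv_eq_zero_iff]
  exact forall_congr' fun i => by omega

end Griess
end
end

section
/- As operators on the field k(z₁,…,z_m) of rational functions, the commutator of Δ*(4,…,4) = Σ_{i=1}^m (z_i²∂_{z_i} + 4z_i) with ℰ = Σ_{i=1}^m (−z_i⁻¹∂_{z_i} + 2z_i⁻²) equals 3Δ, i.e. Δ*(4,…,4)∘ℰ − ℰ∘Δ*(4,…,4) = 3·Σ_{i=1}^m ∂_{z_i}. Consequently, if β ∈ k(z₁,…,z_m) satisfies Δ*(4,…,4)β = 0 and Δβ = 0, then Δ*(4,…,4)(ℰβ) = 0. -/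
open scoped Classical

noncomputable section

namespace Griess

set_option maxHeartbeats 2000000 in
/-- on `k(z₁,…,z_m)` the commutator of `Δ*(4,…,4)` with
`ℰ = Σᵢ(-zᵢ⁻¹∂_{zᵢ} + 2zᵢ⁻²)` equals `3Δ`; consequently, if `Δ*(4,…,4)β = 0` and
`Δβ = 0` then `Δ*(4,…,4)(ℰβ) = 0`. -/
theorem statement17 {k : Type} [Field k] [CharZero k] {m : ℕ}
    (D : Fin m → Derivation k (RF k m) (RF k m)) (hD : IsPartialDeriv D) :
    (∀ β : RF k m,
      DeltaStar D (fun _ => 4) (curlyE D Finset.univ β)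
        - curlyE D Finset.univ (DeltaStar D (fun _ => 4) β) = 3 * Delta D β) ∧
    (∀ β : RF k m, DeltaStar D (fun _ => 4) β = 0 → Delta D β = 0 →
      DeltaStar D (fun _ => 4) (curlyE D Finset.univ β) = 0) := by
  have zne : ∀ i : Fin m, zv (k := k) i ≠ 0 := by
    intro i
    simp only [zv, ne_eq, map_eq_zero_iff _ (IsFractionRing.injective _ _)]
    exact MvPolynomial.X_ne_zero i
  have hzero : ∀ E : Derivation k (RF k m) (RF k m), (∀ j, E (zv j) = 0) → E = 0 := by
    intro E h
    have halg : ∀ p : MvPolynomial (Fin m) k, E (algebraMap _ (RF k m) p) = 0 := by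
      intro p
      have : E.compAlgebraMap (MvPolynomial (Fin m) k) = 0 := by
        apply MvPolynomial.derivation_ext
        intro i
        simpa [Derivation.compAlgebraMap, zv] using h i
      simpa [Derivation.compAlgebraMap] using DFunLike.congr_fun this p
    ext x
    obtain ⟨a, b, hb, rfl⟩ := IsFractionRing.div_surjective (A := MvPolynomial (Fin m) k) x
    have hb0 : (algebraMap (MvPolynomial (Fin m) k) (RF k m)) b ≠ 0 :=
      IsFractionRing.to_map_ne_zero_of_mem_nonZeroDivisors hb
    rw [Derivation.leibniz_div, halg, halg]
    simp
  have hcomm : ∀ (i s : Fin m) (x : RF k m), D i (D s x) = D s (D i x) := by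
    intro i s x
    have hb : ⁅D i, D s⁆ = 0 := by
      apply hzero
      intro j
      rw [Derivation.commutator_apply, hD, hD]
      split_ifs <;> simp
    have := DFunLike.congr_fun hb x
    rw [Derivation.commutator_apply] at this
    simpa [sub_eq_zero] using this
  have hD2 : ∀ i, D i (2 : RF k m) = 0 := by
    intro i
    have : (2 : RF k m) = ((2:ℕ) : RF k m) := by norm_num
    rw [this, Derivation.map_natCast]
  have hD4 : ∀ i, D i (4 : RF k m) = 0 := by
    intro i
    have : (4 : RF k m) = ((4:ℕ) : RF k m) := by norm_num
    rw [this, Derivation.map_natCast]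
  have key : ∀ β : RF k m,
      DeltaStar D (fun _ => 4) (curlyE D Finset.univ β)
        - curlyE D Finset.univ (DeltaStar D (fun _ => 4) β) = 3 * Delta D β := by
    intro β
    unfold DeltaStar curlyE Delta
    have hz : ∀ s : Fin m, (zv (k := k) s) ^ (-2:ℤ) = (zv s)⁻¹ * (zv s)⁻¹ := by
      intro s; rw [zpow_neg, zpow_two, mul_inv]
    simp only [hz, Int.cast_ofNat]
    set e : Fin m → RF k m := fun s => -((zv s)⁻¹ * D s β) + 2 * ((zv s)⁻¹ * (zv s)⁻¹) * β
      with he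
    set a : Fin m → RF k m := fun i => zv i ^ 2 * D i β + (4 : RF k m) * zv i * β with ha
    have pair : ∀ i s : Fin m,
        (zv i ^ 2 * D i (e s) + 4 * zv i * e s)
          - (-((zv s)⁻¹ * D s (a i)) + 2 * ((zv s)⁻¹ * (zv s)⁻¹) * a i)
          = if s = i then 3 * D s β else 0 := by
      intro i s
      have his : D i (zv s) = if s = i then 1 else 0 := hD i s
      have hsi : D s (zv i) = if i = s then 1 else 0 := hD s i
      by_cases h : s = i
      · subst h
        simp only [if_pos rfl] at his ⊢
        simp only [he, ha, map_add, map_neg, Derivation.leibniz, Derivation.leibniz_inv,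
          Derivation.leibniz_pow, smul_eq_mul, neg_smul, smul_neg, nsmul_eq_mul,
          his, hD2, hD4, mul_one, mul_zero, zero_mul, add_zero, zero_add, Nat.cast_ofNat]
        simp only [if_true]
        have hu : zv (k := k) s * (zv s)⁻¹ = 1 := mul_inv_cancel₀ (zne s)
        linear_combination (D s β * (zv s * (zv s)⁻¹ + 3)
          - 4 * (zv s)⁻¹ * β * (zv s * (zv s)⁻¹ + 1)) * hu
      · have h' : ¬ (i = s) := fun hh => h hh.symm
        simp only [if_neg h] at his ⊢
        simp only [if_neg h'] at hsi
        simp only [he, ha, map_add, map_neg, Derivation.leibniz, Derivation.leibniz_inv,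
          Derivation.leibniz_pow, smul_eq_mul, neg_smul, smul_neg, nsmul_eq_mul,
          his, hsi, hD2, hD4, mul_one, mul_zero, zero_mul, add_zero, zero_add, neg_zero,
          Nat.cast_ofNat]
        rw [hcomm i s β]
        field_simp [zne]
        ring
    calc (∑ i, (zv i ^ 2 * D i (∑ s, e s) + 4 * zv i * (∑ s, e s)))
          - ∑ s, (-((zv s)⁻¹ * D s (∑ i, a i)) + 2 * ((zv s)⁻¹ * (zv s)⁻¹) * (∑ i, a i))
        = (∑ i, ∑ s, (zv i ^ 2 * D i (e s) + 4 * zv i * e s))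
          - ∑ i, ∑ s, (-((zv s)⁻¹ * D s (a i)) + 2 * ((zv s)⁻¹ * (zv s)⁻¹) * a i) := by
          rw [Finset.sum_comm (f := fun i s =>
            (-((zv s)⁻¹ * D s (a i)) + 2 * ((zv s)⁻¹ * (zv s)⁻¹) * a i))]
          congr 1
          · refine Finset.sum_congr rfl fun i _ => ?_
            rw [map_sum, Finset.mul_sum, Finset.mul_sum, ← Finset.sum_add_distrib]
          · refine Finset.sum_congr rfl fun s _ => ?_
            rw [map_sum, Finset.mul_sum, Finset.mul_sum, ← Finset.sum_neg_distrib,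
              ← Finset.sum_add_distrib]
      _ = ∑ i, ∑ s, ((zv i ^ 2 * D i (e s) + 4 * zv i * e s)
            - (-((zv s)⁻¹ * D s (a i)) + 2 * ((zv s)⁻¹ * (zv s)⁻¹) * a i)) := by
          rw [← Finset.sum_sub_distrib]
          exact Finset.sum_congr rfl fun i _ => (Finset.sum_sub_distrib _ _).symm
      _ = ∑ i, ∑ s, (if s = i then 3 * D s β else 0) :=
          Finset.sum_congr rfl fun i _ => Finset.sum_congr rfl fun s _ => pair i s
      _ = 3 * ∑ i, D i β := by
          rw [Finset.mul_sum]
          exact Finset.sum_congr rfl fun i _ => by simp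
  refine ⟨key, fun β h1 h2 => ?_⟩
  have := key β
  rw [h1, h2, mul_zero] at this
  have hc0 : curlyE D Finset.univ (0 : RF k m) = 0 := by
    unfold curlyE
    simp
  rw [hc0, sub_zero] at this
  exact this

end Griess
end
end
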